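/- arXiv:2407.13086 — 5 statements merged into one kernel-verified Lean document; each statement's English description precedes it below -/
import Mathlib

section
/- Let n ≥ 1 be a natural number and x > 0 a real number. For 1 ≤ r ≤ n define a_r = (n choose r) · n! · x^r / ((n − r)! · √(r!)), where factorials are regarded as real numbers. Then for every 1 ≤ r ≤ n − 1 one has a_{r+1} / a_r = x · (n − r)² / (r + 1)^{3/2}, and in particular a_{r+1} / a_r ≤ n² · x; hence if n² · x ≤ 1 the finite sequence (a_r)_{r=1,…,n} is nonincreasing. -/
/-- Key combinatorial estimate: for `a_r = (n choose r) · n! · x^r / ((n−r)! · √(r!))`,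
the ratio `a_{r+1}/a_r` equals `x · (n−r)² / (r+1)^{3/2}`, is bounded by `n² · x`,
and hence the sequence is nonincreasing whenever `n² · x ≤ 1`. -/
theorem stmt_0 (n : ℕ) (hn : 1 ≤ n) (x : ℝ) (hx : 0 < x)
    (a : ℕ → ℝ)
    (ha : ∀ r, a r = (n.choose r : ℝ) * (n.factorial : ℝ) * x ^ r /
      (((n - r).factorial : ℝ) * Real.sqrt ((r.factorial : ℝ)))) :
    (∀ r, 1 ≤ r → r ≤ n - 1 →
        a (r + 1) / a r = x * ((n : ℝ) - (r : ℝ)) ^ 2 / ((r : ℝ) + 1) ^ ((3 : ℝ) / 2) ∧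
        a (r + 1) / a r ≤ (n : ℝ) ^ 2 * x) ∧
    ((n : ℝ) ^ 2 * x ≤ 1 → ∀ r, 1 ≤ r → r ≤ n - 1 → a (r + 1) ≤ a r) := by
  have key : ∀ r, 1 ≤ r → r ≤ n - 1 →
      a (r + 1) / a r = x * ((n : ℝ) - (r : ℝ)) ^ 2 / ((r : ℝ) + 1) ^ ((3 : ℝ) / 2) := by
    intro r hr1 hr2
    have hrn : r < n := by omega
    -- positivity facts
    have hc : (0 : ℝ) < (n.choose r : ℝ) := by
      exact_mod_cast Nat.choose_pos hrn.le
    have hf : (0 : ℝ) < ((n - (r+1)).factorial : ℝ) := by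
      exact_mod_cast Nat.factorial_pos _
    have hrf : (0 : ℝ) < (r.factorial : ℝ) := by exact_mod_cast Nat.factorial_pos _
    have hsrf : (0 : ℝ) < Real.sqrt (r.factorial : ℝ) := Real.sqrt_pos.mpr hrf
    have hr1p : (0 : ℝ) < (r : ℝ) + 1 := by positivity
    have hsr1 : (0 : ℝ) < Real.sqrt ((r : ℝ) + 1) := Real.sqrt_pos.mpr hr1p
    have hnr : (0 : ℝ) < (n : ℝ) - (r : ℝ) := by
      have : (r : ℝ) < (n : ℝ) := by exact_mod_cast hrn
      linarith
    -- choose recursion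
    have h1 : (n.choose (r+1) : ℝ) * ((r : ℝ) + 1) = (n.choose r : ℝ) * ((n : ℝ) - (r : ℝ)) := by
      have h := Nat.choose_succ_right_eq n r
      have : ((n.choose (r+1) * (r+1) : ℕ) : ℝ) = ((n.choose r * (n - r) : ℕ) : ℝ) := by
        exact_mod_cast congrArg (Nat.cast : ℕ → ℝ) h
      push_cast [Nat.cast_sub hrn.le] at this
      linarith [this]
    -- factorial recursion
    have h2 : ((n - r).factorial : ℝ) = ((n : ℝ) - (r : ℝ)) * ((n - (r+1)).factorial : ℝ) := by
      have he : n - r = (n - (r+1)) + 1 := by omega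
      rw [he, Nat.factorial_succ]
      push_cast
      have : ((n - (r+1) : ℕ) : ℝ) = (n : ℝ) - (r : ℝ) - 1 := by
        push_cast [Nat.cast_sub (by omega : r + 1 ≤ n)]
        ring
      rw [this]; ring
    have h3 : Real.sqrt (((r+1).factorial : ℝ)) =
        Real.sqrt ((r.factorial : ℝ)) * Real.sqrt ((r : ℝ) + 1) := by
      rw [Nat.factorial_succ]
      push_cast
      rw [show ((r:ℝ)+1) * (r.factorial : ℝ) = (r.factorial : ℝ) * ((r:ℝ)+1) by ring]
      exact Real.sqrt_mul hrf.le _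
    have h4 : ((r : ℝ) + 1) ^ ((3 : ℝ) / 2) = ((r : ℝ) + 1) * Real.sqrt ((r : ℝ) + 1) := by
      rw [Real.sqrt_eq_rpow, show (3:ℝ)/2 = 1 + 1/2 by norm_num,
        Real.rpow_add hr1p, Real.rpow_one]
    rw [ha, ha, h2, h3, h4]
    have hx' : x ≠ 0 := hx.ne'
    have hnf : (0 : ℝ) < (n.factorial : ℝ) := by exact_mod_cast Nat.factorial_pos _
    rw [pow_succ]
    field_simp
    linear_combination h1
  have bound : ∀ r, 1 ≤ r → r ≤ n - 1 → a (r + 1) / a r ≤ (n : ℝ) ^ 2 * x := by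
    intro r hr1 hr2
    rw [key r hr1 hr2]
    have hr1p : (0 : ℝ) < (r : ℝ) + 1 := by positivity
    have hr0 : (0:ℝ) ≤ (r : ℝ) := Nat.cast_nonneg r
    have hone : (1 : ℝ) ≤ ((r : ℝ) + 1) ^ ((3 : ℝ) / 2) := by
      apply Real.one_le_rpow (by linarith) (by norm_num)
    have hnum : x * ((n : ℝ) - (r : ℝ)) ^ 2 ≤ (n : ℝ) ^ 2 * x := by
      have hnn : ((r:ℝ)) ≤ (n : ℝ) := by exact_mod_cast (by omega : r ≤ n)
      nlinarith [mul_nonneg (mul_nonneg hx.le hr0) (by linarith : (0:ℝ) ≤ 2*(n:ℝ) - r)]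
    exact le_trans (div_le_self (by positivity) hone) hnum
  refine ⟨fun r hr1 hr2 => ⟨key r hr1 hr2, bound r hr1 hr2⟩, ?_⟩
  intro h r hr1 hr2
  have hpos : 0 < a r := by
    rw [ha]
    have hc : (0 : ℝ) < (n.choose r : ℝ) := by
      exact_mod_cast Nat.choose_pos (by omega : r ≤ n)
    positivity
  have hle : a (r + 1) / a r ≤ 1 := le_trans (bound r hr1 hr2) h
  calc a (r + 1) = a (r + 1) / a r * a r := by field_simp
    _ ≤ 1 * a r := by exact mul_le_mul_of_nonneg_right hle hpos.le
    _ = a r := by ring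
end

section
/- Let n ≥ 1 be a natural number and x > 0 a real number with n² · x ≤ 1. Then n! · Σ_{k=0}^{n−1} (n choose k) · x^{n−k} / (√((n−k)!) · k!) ≤ n³ · x, where all factorials and binomial coefficients are regarded as real numbers. -/
/-- If `n ≥ 1` and `0 < x` with `n² · x ≤ 1`, then
`n! · Σ_{k=0}^{n−1} (n choose k) · x^{n−k} / (√((n−k)!) · k!) ≤ n³ · x`. -/
theorem stmt_1 (n : ℕ) (hn : 1 ≤ n) (x : ℝ) (hx : 0 < x)
    (h : (n : ℝ) ^ 2 * x ≤ 1) :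
    (n.factorial : ℝ) *
      ∑ k ∈ Finset.range n,
        (n.choose k : ℝ) * x ^ (n - k) /
          (Real.sqrt (((n - k).factorial : ℝ)) * (k.factorial : ℝ))
      ≤ (n : ℝ) ^ 3 * x := by
  rw [Finset.mul_sum]
  have key : ∀ k ∈ Finset.range n,
      (n.factorial : ℝ) * ((n.choose k : ℝ) * x ^ (n - k) /
        (Real.sqrt (((n - k).factorial : ℝ)) * (k.factorial : ℝ)))
      ≤ (n : ℝ) ^ 2 * x := by
    intro k hk
    rw [Finset.mem_range] at hk
    set r := n - k with hr
    have hr1 : 1 ≤ r := by omega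
    have hkr : k ≤ n := hk.le
    have hS1 : (1 : ℝ) ≤ Real.sqrt (r.factorial : ℝ) := by
      rw [show (1:ℝ) = Real.sqrt 1 by simp]
      exact Real.sqrt_le_sqrt (by exact_mod_cast r.factorial_pos)
    have hSpos : (0:ℝ) < Real.sqrt (r.factorial : ℝ) := lt_of_lt_of_le one_pos hS1
    have hkf : (0:ℝ) < (k.factorial : ℝ) := by exact_mod_cast k.factorial_pos
    have hrf : (1:ℝ) ≤ (r.factorial : ℝ) := by exact_mod_cast r.factorial_pos
    -- C(n,k) * r! ≤ n ^ r  since C(n,k) = C(n,r), C(n,r)*r! = descFactorial n r ≤ n^r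
    have h1 : (n.choose k : ℝ) * (r.factorial : ℝ) ≤ (n:ℝ) ^ r := by
      have : n.choose k * r.factorial ≤ n ^ r := by
        rw [← Nat.choose_symm hkr]
        calc n.choose r * r.factorial = r.factorial * n.choose r := Nat.mul_comm _ _
        _ = n.descFactorial r := (Nat.descFactorial_eq_factorial_mul_choose n r).symm
        _ ≤ n ^ r := Nat.descFactorial_le_pow n r
      exact_mod_cast this
    -- n! ≤ k! * n ^ r
    have h2 : (n.factorial : ℝ) ≤ (k.factorial : ℝ) * (n:ℝ) ^ r := by
      have : n.factorial ≤ k.factorial * n ^ r := by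
        have := Nat.factorial_mul_descFactorial (show r ≤ n by omega)
        rw [show n - r = k by omega] at this
        rw [← this]
        exact Nat.mul_le_mul_left _ (Nat.descFactorial_le_pow n r)
      exact_mod_cast this
    have hxr : (0:ℝ) < x ^ r := pow_pos hx r
    have hnx : (0:ℝ) < (n:ℝ)^2 * x := by positivity
    have hCn : (0:ℝ) ≤ (n.choose k : ℝ) := by positivity
    have step1 : (n.factorial : ℝ) * ((n.choose k : ℝ) * x ^ r /
        (Real.sqrt (r.factorial : ℝ) * (k.factorial : ℝ))) ≤ ((n:ℝ)^2 * x) ^ r := by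
      rw [mul_div_assoc', div_le_iff₀ (by positivity)]
      have : ((n:ℝ)^2 * x) ^ r = (n:ℝ)^r * (n:ℝ)^r * x^r := by
        rw [mul_pow, ← pow_mul, two_mul, pow_add]
      rw [this]
      have hA : (n.factorial : ℝ) * ((n.choose k : ℝ) * x ^ r)
          ≤ ((k.factorial : ℝ) * (n:ℝ)^r) * ((n.choose k : ℝ) * x ^ r) := by
        apply mul_le_mul_of_nonneg_right h2 (by positivity)
      have hC : (n.choose k : ℝ) ≤ (n:ℝ)^r * Real.sqrt (r.factorial : ℝ) := by
        calc (n.choose k : ℝ) ≤ (n.choose k : ℝ) * (r.factorial : ℝ) := le_mul_of_one_le_right hCn hrf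
        _ ≤ (n:ℝ)^r := h1
        _ ≤ (n:ℝ)^r * Real.sqrt (r.factorial : ℝ) := le_mul_of_one_le_right (by positivity) hS1
      calc (n.factorial : ℝ) * ((n.choose k : ℝ) * x ^ r)
          ≤ ((k.factorial : ℝ) * (n:ℝ)^r) * ((n.choose k : ℝ) * x ^ r) := hA
        _ ≤ ((k.factorial : ℝ) * (n:ℝ)^r) * (((n:ℝ)^r * Real.sqrt (r.factorial : ℝ)) * x ^ r) := by
            apply mul_le_mul_of_nonneg_left (mul_le_mul_of_nonneg_right hC hxr.le) (by positivity)
        _ = (n:ℝ)^r * (n:ℝ)^r * x^r * (Real.sqrt (r.factorial : ℝ) * (k.factorial : ℝ)) := by ring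
    have step2 : ((n:ℝ)^2 * x) ^ r ≤ (n:ℝ)^2 * x := by
      calc ((n:ℝ)^2 * x) ^ r ≤ ((n:ℝ)^2 * x) ^ 1 :=
        pow_le_pow_of_le_one hnx.le h hr1
      _ = (n:ℝ)^2 * x := pow_one _
    exact step1.trans step2
  calc ∑ k ∈ Finset.range n, (n.factorial : ℝ) * ((n.choose k : ℝ) * x ^ (n - k) /
          (Real.sqrt (((n - k).factorial : ℝ)) * (k.factorial : ℝ)))
      ≤ ∑ k ∈ Finset.range n, (n:ℝ)^2 * x := Finset.sum_le_sum key
    _ = (n:ℝ) * ((n:ℝ)^2 * x) := by rw [Finset.sum_const, Finset.card_range]; simp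
    _ = (n:ℝ)^3 * x := by ring
end

section
/- Let β ∈ (0, 1/2] be a real number, n a natural number, and ρ ∈ [0, 1]. Then ∫_0^ρ (1 − (1 − r)^β)^{n/2} · (1 − r)^{−1/2} dr ≤ (2/(β·(n + 2))) · (1 − (1 − ρ)^β)^{(n+2)/2}. -/
/-- For `β ∈ (0, 1/2]`, `n : ℕ` and `ρ ∈ [0,1]`,
`∫_0^ρ (1 − (1−r)^β)^{n/2} · (1−r)^{−1/2} dr ≤ (2/(β·(n+2))) · (1 − (1−ρ)^β)^{(n+2)/2}`. -/
theorem stmt_5 (β : ℝ) (hβ : β ∈ Set.Ioc (0 : ℝ) (1 / 2)) (n : ℕ) (ρ : ℝ)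
    (hρ : ρ ∈ Set.Icc (0 : ℝ) 1) :
    ∫ r in (0 : ℝ)..ρ,
        (1 - (1 - r) ^ β) ^ ((n : ℝ) / 2) * (1 - r) ^ (-(1 : ℝ) / 2)
      ≤ (2 / (β * ((n : ℝ) + 2))) * (1 - (1 - ρ) ^ β) ^ (((n : ℝ) + 2) / 2) := by
  obtain ⟨hβ0, hβ2⟩ := hβ
  obtain ⟨hρ0, hρ1⟩ := hρ
  set p : ℝ := ((n : ℝ) + 2) / 2 with hp_def
  have hn2 : (0 : ℝ) < (n : ℝ) + 2 := by positivity
  have hp1 : (1 : ℝ) ≤ p := by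
    rw [hp_def]
    have : (0:ℝ) ≤ (n:ℝ) := Nat.cast_nonneg n
    linarith
  set c : ℝ := 2 / (β * ((n : ℝ) + 2)) with hc_def
  set g : ℝ → ℝ := fun r => (1 - (1 - r) ^ β) ^ ((n : ℝ) / 2) * (1 - r) ^ (β - 1) with hg_def
  set f : ℝ → ℝ := fun r => (1 - (1 - r) ^ β) ^ ((n : ℝ) / 2) * (1 - r) ^ (-(1 : ℝ) / 2)
    with hf_def
  -- integrability of the comparison function (1-r)^(β-1)
  have hbase : IntervalIntegrable (fun r : ℝ => (1 - r) ^ (β - 1)) MeasureTheory.volume 0 ρ := by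
    have h1 : IntervalIntegrable (fun x : ℝ => x ^ (β - 1)) MeasureTheory.volume (1 - 0) (1 - ρ) :=
      intervalIntegral.intervalIntegrable_rpow' (by linarith)
    simpa using h1.comp_sub_left 1
  have hmeas_inner : Measurable fun r : ℝ => (1 - (1 - r) ^ β) ^ ((n : ℝ) / 2) := by
    apply Measurable.pow_const
    exact (measurable_const.sub ((measurable_const.sub measurable_id).pow_const β))
  -- pointwise facts on [0, ρ]
  have key : ∀ r ∈ Set.Icc (0:ℝ) ρ, 0 ≤ 1 - (1 - r) ^ β ∧ 1 - (1 - r) ^ β ≤ 1 := by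
    intro r hr
    have h0 : (0:ℝ) ≤ 1 - r := by linarith [hr.2, hρ1]
    have h1 : (1 - r) ^ β ≤ 1 := by
      apply Real.rpow_le_one h0 (by linarith [hr.1]) hβ0.le
    have h2 : (0:ℝ) ≤ (1 - r) ^ β := Real.rpow_nonneg h0 β
    constructor <;> linarith
  -- ‖g r‖ ≤ ‖(1-r)^(β-1)‖ on Ι 0 ρ, and similarly for f
  have habs : ∀ r ∈ Set.uIoc (0:ℝ) ρ, ‖g r‖ ≤ ‖(1 - r) ^ (β - 1)‖ ∧ ‖f r‖ ≤ ‖(1 - r) ^ (β - 1)‖ := by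
    intro r hr
    rw [Set.uIoc_of_le hρ0] at hr
    have hrI : r ∈ Set.Icc (0:ℝ) ρ := ⟨hr.1.le, hr.2⟩
    obtain ⟨hu0, hu1⟩ := key r hrI
    have h0 : (0:ℝ) ≤ 1 - r := by linarith [hr.2, hρ1]
    have hfac0 : (0:ℝ) ≤ (1 - (1 - r) ^ β) ^ ((n:ℝ)/2) := Real.rpow_nonneg hu0 _
    have hfac1 : (1 - (1 - r) ^ β) ^ ((n:ℝ)/2) ≤ 1 := Real.rpow_le_one hu0 hu1 (by positivity)
    have hb0 : (0:ℝ) ≤ (1 - r) ^ (β - 1) := Real.rpow_nonneg h0 _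
    have hhalf0 : (0:ℝ) ≤ (1 - r) ^ (-(1:ℝ)/2) := Real.rpow_nonneg h0 _
    have hhalf : (1 - r) ^ (-(1:ℝ)/2) ≤ (1 - r) ^ (β - 1) := by
      rcases eq_or_lt_of_le h0 with h | h
      · rw [← h, Real.zero_rpow (by norm_num), Real.zero_rpow (by linarith)]
      · exact Real.rpow_le_rpow_of_exponent_ge h (by linarith [hr.1]) (by linarith)
    constructor
    · rw [Real.norm_of_nonneg (by positivity), Real.norm_of_nonneg hb0]
      calc (1 - (1 - r) ^ β) ^ ((n:ℝ)/2) * (1 - r) ^ (β - 1)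
          ≤ 1 * (1 - r) ^ (β - 1) := by gcongr
        _ = (1 - r) ^ (β - 1) := one_mul _
    · rw [Real.norm_of_nonneg (by positivity), Real.norm_of_nonneg hb0]
      calc (1 - (1 - r) ^ β) ^ ((n:ℝ)/2) * (1 - r) ^ (-(1:ℝ)/2)
          ≤ 1 * (1 - r) ^ (β - 1) := by
            apply mul_le_mul hfac1 hhalf hhalf0 (by norm_num)
        _ = (1 - r) ^ (β - 1) := one_mul _
  have hg_int : IntervalIntegrable g MeasureTheory.volume 0 ρ := by
    apply hbase.mono_fun'
    · exact (hmeas_inner.mul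
        ((measurable_const.sub measurable_id).pow_const (β - 1))).aestronglyMeasurable
    · filter_upwards [MeasureTheory.ae_restrict_mem measurableSet_uIoc] with r hr
      have := (habs r hr).1
      have h0 : (0:ℝ) ≤ 1 - r := by
        rw [Set.uIoc_of_le hρ0] at hr; linarith [hr.2, hρ1]
      have hb0 : (0:ℝ) ≤ (1 - r) ^ (β - 1) := Real.rpow_nonneg h0 _
      rwa [Real.norm_of_nonneg hb0] at this
  have hf_int : IntervalIntegrable f MeasureTheory.volume 0 ρ := by
    apply hbase.mono_fun'
    · exact (hmeas_inner.mul
        ((measurable_const.sub measurable_id).pow_const (-(1:ℝ)/2))).aestronglyMeasurable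
    · filter_upwards [MeasureTheory.ae_restrict_mem measurableSet_uIoc] with r hr
      have := (habs r hr).2
      have h0 : (0:ℝ) ≤ 1 - r := by
        rw [Set.uIoc_of_le hρ0] at hr; linarith [hr.2, hρ1]
      have hb0 : (0:ℝ) ≤ (1 - r) ^ (β - 1) := Real.rpow_nonneg h0 _
      rwa [Real.norm_of_nonneg hb0] at this
  -- step 1: ∫ f ≤ ∫ g
  have hmono : (∫ r in (0:ℝ)..ρ, f r) ≤ ∫ r in (0:ℝ)..ρ, g r := by
    apply intervalIntegral.integral_mono_on hρ0 hf_int hg_int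
    intro r hr
    obtain ⟨hu0, _⟩ := key r hr
    have h0 : (0:ℝ) ≤ 1 - r := by linarith [hr.2, hρ1]
    have hfac0 : (0:ℝ) ≤ (1 - (1 - r) ^ β) ^ ((n:ℝ)/2) := Real.rpow_nonneg hu0 _
    have hhalf : (1 - r) ^ (-(1:ℝ)/2) ≤ (1 - r) ^ (β - 1) := by
      rcases eq_or_lt_of_le h0 with h | h
      · rw [← h, Real.zero_rpow (by norm_num), Real.zero_rpow (by linarith)]
      · exact Real.rpow_le_rpow_of_exponent_ge h (by linarith [hr.1]) (by linarith)
    exact mul_le_mul_of_nonneg_left hhalf hfac0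
  -- step 2: ∫ g = c * (1 - (1-ρ)^β)^p via FTC
  set F : ℝ → ℝ := fun r => c * (1 - (1 - r) ^ β) ^ p with hF_def
  have hFcont : Continuous F := by
    apply continuous_const.mul
    apply (Real.continuous_rpow_const (by positivity)).comp
    exact continuous_const.sub ((Real.continuous_rpow_const hβ0.le).comp
      (continuous_const.sub continuous_id))
  have hderiv : ∀ r ∈ Set.Ioo (0:ℝ) ρ, HasDerivAt F (g r) r := by
    intro r hr
    have h0 : (0:ℝ) < 1 - r := by linarith [hr.2, hρ1]
    have h1 : HasDerivAt (fun r : ℝ => 1 - r) (-1) r := (hasDerivAt_id r).const_sub 1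
    have h2 : HasDerivAt (fun x : ℝ => x ^ β) (β * (1 - r) ^ (β - 1)) (1 - r) :=
      Real.hasDerivAt_rpow_const (Or.inl h0.ne')
    have h3 : HasDerivAt (fun r : ℝ => (1 - r) ^ β) (β * (1 - r) ^ (β - 1) * (-1)) r :=
      h2.comp r h1
    have h4 : HasDerivAt (fun r : ℝ => 1 - (1 - r) ^ β)
        (-(β * (1 - r) ^ (β - 1) * (-1))) r := h3.const_sub 1
    have h5 : HasDerivAt (fun x : ℝ => x ^ p) (p * (1 - (1 - r) ^ β) ^ (p - 1))
        (1 - (1 - r) ^ β) := Real.hasDerivAt_rpow_const (Or.inr hp1)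
    have h6 := (h5.comp r h4).const_mul c
    have hpe : p - 1 = (n : ℝ) / 2 := by rw [hp_def]; ring
    have heq : c * (p * (1 - (1 - r) ^ β) ^ (p - 1) * -(β * (1 - r) ^ (β - 1) * -1))
        = g r := by
      rw [hpe, hg_def, hc_def, hp_def]
      field_simp
    rw [← heq]
    exact h6
  have hFTC : (∫ r in (0:ℝ)..ρ, g r) = F ρ - F 0 :=
    intervalIntegral.integral_eq_sub_of_hasDerivAt_of_le hρ0 hFcont.continuousOn hderiv hg_int
  have hF0 : F 0 = 0 := by
    simp only [hF_def, sub_zero, Real.one_rpow, sub_self]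
    rw [Real.zero_rpow (by positivity), mul_zero]
  calc (∫ r in (0:ℝ)..ρ, f r) ≤ ∫ r in (0:ℝ)..ρ, g r := hmono
    _ = F ρ - F 0 := hFTC
    _ = c * (1 - (1 - ρ) ^ β) ^ p := by rw [hF0, sub_zero]
end

section
/- Let E be a real inner product space of finite dimension N, let 1 ≤ d ≤ N, let (e_1, …, e_d) be an orthonormal family in E, and let (ε_1, …, ε_N) be an orthonormal basis of E. Define the quadrilinear form Θ̂(a, b, c, c') = (1/24) · Σ_{i=1}^d Σ_{j=1}^d ( ⟨a, e_i⟩⟨b, e_j⟩⟨c, e_i⟩⟨c', e_j⟩ − ⟨a, e_i⟩⟨b, e_j⟩⟨c, e_j⟩⟨c', e_i⟩ ). Then for all v, w ∈ E, Σ_{α=1}^N Θ̂(v, ε_α, w, ε_α) = ((d − 1)/24) · ⟨P v, P w⟩, where P : E → E is the orthogonal projection onto the span of {e_1, …, e_d}. -/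
/-- Contraction of the `t²`-coefficient tensor of the fourth-level expected signature of the
Brownian loop: for an orthonormal family `(e_1, …, e_d)` in an `N`-dimensional real inner
product space `E` and an orthonormal basis `(ε_1, …, ε_N)` of `E`, the `(2,4)`-contraction of
`Θ̂(a,b,c,c') = (1/24)·Σ_{i,j}(⟨a,e_i⟩⟨b,e_j⟩⟨c,e_i⟩⟨c',e_j⟩ − ⟨a,e_i⟩⟨b,e_j⟩⟨c,e_j⟩⟨c',e_i⟩)`
equals `((d−1)/24)·⟨P v, P w⟩`, `P` the orthogonal projection onto `span{e_1,…,e_d}`. -/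
theorem stmt_6 {E : Type*} [NormedAddCommGroup E] [InnerProductSpace ℝ E]
    [FiniteDimensional ℝ E] {N d : ℕ} (hN : Module.finrank ℝ E = N)
    (hd1 : 1 ≤ d) (hdN : d ≤ N)
    (e : Fin d → E) (he : Orthonormal ℝ e)
    (ε : OrthonormalBasis (Fin N) ℝ E)
    (Θ : E → E → E → E → ℝ)
    (hΘ : ∀ a b c c', Θ a b c c' = (1 / 24) *
      ∑ i : Fin d, ∑ j : Fin d,
        ((inner ℝ a (e i) : ℝ) * (inner ℝ b (e j) : ℝ) * (inner ℝ c (e i) : ℝ) * (inner ℝ c' (e j) : ℝ)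
          - (inner ℝ a (e i) : ℝ) * (inner ℝ b (e j) : ℝ) * (inner ℝ c (e j) : ℝ) *
              (inner ℝ c' (e i) : ℝ)))
    (v w : E) :
    ∑ α : Fin N, Θ v (ε α) w (ε α)
      = (((d : ℝ) - 1) / 24) *
          (inner ℝ
            ((Submodule.orthogonalProjectionOnto (Submodule.span ℝ (Set.range e)) v : E))
            ((Submodule.orthogonalProjectionOnto (Submodule.span ℝ (Set.range e)) w : E)) : ℝ) := by
  have hee : ∀ i j : Fin d, (inner ℝ (e i) (e j) : ℝ) = if i = j then 1 else 0 :=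
    orthonormal_iff_ite.mp he
  -- Parseval
  have key : ∀ x y : E, ∑ α : Fin N, (inner ℝ (ε α) x : ℝ) * (inner ℝ (ε α) y : ℝ)
      = (inner ℝ x y : ℝ) := by
    intro x y
    have := ε.sum_inner_mul_inner x y
    calc ∑ α : Fin N, (inner ℝ (ε α) x : ℝ) * (inner ℝ (ε α) y : ℝ)
        = ∑ α : Fin N, (inner ℝ x (ε α) : ℝ) * (inner ℝ (ε α) y : ℝ) := by
          refine Finset.sum_congr rfl fun α _ => ?_
          rw [real_inner_comm (ε α) x]
      _ = (inner ℝ x y : ℝ) := this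
  -- the orthogonal projection as a sum
  have hproj : ∀ u : E, ((Submodule.orthogonalProjectionOnto (Submodule.span ℝ (Set.range e)) u : E))
      = ∑ i : Fin d, (inner ℝ u (e i) : ℝ) • e i := by
    intro u
    rw [← Submodule.starProjection_apply]; apply Submodule.eq_starProjection_of_mem_of_inner_eq_zero
    · exact Submodule.sum_mem _ fun i _ =>
        Submodule.smul_mem _ _ (Submodule.subset_span ⟨i, rfl⟩)
    · intro x hx
      induction hx using Submodule.span_induction with
      | mem x hx =>
        obtain ⟨j, rfl⟩ := hx
        rw [inner_sub_left, sum_inner]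
        simp only [real_inner_smul_left, hee, mul_ite, mul_one, mul_zero]
        simp [real_inner_comm]
      | zero => simp
      | add x y hx hy ihx ihy => rw [inner_add_right, ihx, ihy, add_zero]
      | smul c x hx ih => rw [real_inner_smul_right, ih, mul_zero]
  -- inner product of projections
  have hPP : (inner ℝ ((Submodule.orthogonalProjectionOnto (Submodule.span ℝ (Set.range e)) v : E))
      ((Submodule.orthogonalProjectionOnto (Submodule.span ℝ (Set.range e)) w : E)) : ℝ)
      = ∑ i : Fin d, (inner ℝ v (e i) : ℝ) * (inner ℝ w (e i) : ℝ) := by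
    rw [hproj v, hproj w, sum_inner]
    refine Finset.sum_congr rfl fun i _ => ?_
    rw [real_inner_smul_left, inner_sum]
    simp only [real_inner_smul_right, hee, mul_ite, mul_one, mul_zero]
    simp
  -- compute the left-hand side
  have h1 : ∀ i j : Fin d,
      (∑ α : Fin N, ((inner ℝ v (e i) : ℝ) * (inner ℝ (ε α) (e j) : ℝ) * (inner ℝ w (e i) : ℝ)
          * (inner ℝ (ε α) (e j) : ℝ)
        - (inner ℝ v (e i) : ℝ) * (inner ℝ (ε α) (e j) : ℝ) * (inner ℝ w (e j) : ℝ)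
          * (inner ℝ (ε α) (e i) : ℝ)))
      = (inner ℝ v (e i) : ℝ) * (inner ℝ w (e i) : ℝ)
        - (inner ℝ v (e i) : ℝ) * (inner ℝ w (e j) : ℝ) * (if j = i then 1 else 0) := by
    intro i j
    rw [Finset.sum_sub_distrib]
    have t1 : (∑ α : Fin N, (inner ℝ v (e i) : ℝ) * (inner ℝ (ε α) (e j) : ℝ)
        * (inner ℝ w (e i) : ℝ) * (inner ℝ (ε α) (e j) : ℝ))
        = (inner ℝ v (e i) : ℝ) * (inner ℝ w (e i) : ℝ)
          * ∑ α : Fin N, (inner ℝ (ε α) (e j) : ℝ) * (inner ℝ (ε α) (e j) : ℝ) := by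
      rw [Finset.mul_sum]; exact Finset.sum_congr rfl fun α _ => by ring
    have t2 : (∑ α : Fin N, (inner ℝ v (e i) : ℝ) * (inner ℝ (ε α) (e j) : ℝ)
        * (inner ℝ w (e j) : ℝ) * (inner ℝ (ε α) (e i) : ℝ))
        = (inner ℝ v (e i) : ℝ) * (inner ℝ w (e j) : ℝ)
          * ∑ α : Fin N, (inner ℝ (ε α) (e j) : ℝ) * (inner ℝ (ε α) (e i) : ℝ) := by
      rw [Finset.mul_sum]; exact Finset.sum_congr rfl fun α _ => by ring
    rw [t1, t2, key, key, hee, hee]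
    simp
  calc ∑ α : Fin N, Θ v (ε α) w (ε α)
      = (1 / 24 : ℝ) * ∑ i : Fin d, ∑ j : Fin d,
          (∑ α : Fin N, ((inner ℝ v (e i) : ℝ) * (inner ℝ (ε α) (e j) : ℝ) * (inner ℝ w (e i) : ℝ)
              * (inner ℝ (ε α) (e j) : ℝ)
            - (inner ℝ v (e i) : ℝ) * (inner ℝ (ε α) (e j) : ℝ) * (inner ℝ w (e j) : ℝ)
              * (inner ℝ (ε α) (e i) : ℝ))) := by
        simp_rw [hΘ, ← Finset.mul_sum]
        congr 1
        rw [Finset.sum_comm]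
        exact Finset.sum_congr rfl fun i _ => Finset.sum_comm
    _ = (1 / 24 : ℝ) * ∑ i : Fin d,
          (((d : ℝ) * ((inner ℝ v (e i) : ℝ) * (inner ℝ w (e i) : ℝ)))
            - (inner ℝ v (e i) : ℝ) * (inner ℝ w (e i) : ℝ)) := by
        congr 1
        refine Finset.sum_congr rfl fun i _ => ?_
        simp_rw [h1]
        rw [Finset.sum_sub_distrib, Finset.sum_const, Finset.card_univ, Fintype.card_fin]
        congr 1
        · simp [mul_comm]
        · simp
    _ = (((d : ℝ) - 1) / 24) * ∑ i : Fin d, (inner ℝ v (e i) : ℝ) * (inner ℝ w (e i) : ℝ) := by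
        rw [Finset.mul_sum, Finset.mul_sum]
        exact Finset.sum_congr rfl fun i _ => by ring
    _ = _ := by rw [hPP]
end

section
/- Let d, N be natural numbers and let F be a map from the Euclidean space ℝ^d to the Euclidean space ℝ^N that is twice continuously differentiable on a neighbourhood of 0. Suppose that for all vectors u, v, w ∈ ℝ^d, the directional derivative at 0 in direction w of the function x ↦ ⟨DF(x)u, DF(x)v⟩ vanishes, where DF(x) denotes the (first) Fréchet derivative of F at x and ⟨·,·⟩ is the Euclidean inner product on ℝ^N. Then for all u, v, w ∈ ℝ^d one has ⟨D²F(0)(u, v), DF(0)w⟩ = 0, where D²F(0) is the second derivative of F at 0 regarded as a symmetric bilinear map ℝ^d × ℝ^d → ℝ^N. -/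
/-- If `F : ℝ^d → ℝ^N` is C² near `0` and all first directional derivatives at `0` of the
metric coefficients `x ↦ ⟨DF(x)u, DF(x)v⟩` vanish, then the second derivative `D²F(0)(u,v)`
is orthogonal to the range of `DF(0)`. -/
theorem stmt_7 {d N : ℕ}
    (F : EuclideanSpace ℝ (Fin d) → EuclideanSpace ℝ (Fin N))
    (hF : ContDiffAt ℝ 2 F 0)
    (h : ∀ u v w : EuclideanSpace ℝ (Fin d),
      fderiv ℝ (fun x => (inner ℝ (fderiv ℝ F x u) (fderiv ℝ F x v) : ℝ)) 0 w = 0)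
    (u v w : EuclideanSpace ℝ (Fin d)) :
    (inner ℝ (fderiv ℝ (fderiv ℝ F) 0 u v) (fderiv ℝ F 0 w) : ℝ) = 0 := by
  set DF := fderiv ℝ F with hDF
  have hdf : DifferentiableAt ℝ DF 0 := by
    have : ContDiffAt ℝ 1 DF 0 := by
      have := hF.fderiv_right (m := 1) (by norm_num)
      exact this
    exact this.differentiableAt one_ne_zero
  -- A a b c := ⟨D²(a,b), DF(c)⟩
  set A : EuclideanSpace ℝ (Fin d) → EuclideanSpace ℝ (Fin d) →
      EuclideanSpace ℝ (Fin d) → ℝ :=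
    fun a b c => (inner ℝ (fderiv ℝ DF 0 a b) (DF 0 c) : ℝ) with hA
  -- each map x ↦ DF x b is differentiable at 0 with derivative a ↦ D²(a,b)
  have hdiffb : ∀ b : EuclideanSpace ℝ (Fin d),
      HasFDerivAt (fun x => DF x b) ((fderiv ℝ DF 0).flip b) 0 := by
    intro b
    have := hdf.hasFDerivAt.clm_apply (hasFDerivAt_const b 0)
    simpa using this
  have key : ∀ a b c, A a b c + A a c b = 0 := by
    intro a b c
    have hb := (hdiffb b).differentiableAt
    have hc := (hdiffb c).differentiableAt
    have := fderiv_inner_apply (𝕜 := ℝ) hb hc a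
    rw [h b c a] at this
    have h1 : fderiv ℝ (fun x => DF x b) 0 a = fderiv ℝ DF 0 a b := by
      rw [(hdiffb b).fderiv]; rfl
    have h2 : fderiv ℝ (fun x => DF x c) 0 a = fderiv ℝ DF 0 a c := by
      rw [(hdiffb c).fderiv]; rfl
    rw [h1, h2] at this
    simp only [hA]
    have hcomm : (inner ℝ (DF 0 b) (fderiv ℝ DF 0 a c) : ℝ)
        = (inner ℝ (fderiv ℝ DF 0 a c) (DF 0 b) : ℝ) := real_inner_comm _ _
    linarith
  have symm : ∀ a b c, A a b c = A b a c := by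
    intro a b c
    have := hF.isSymmSndFDerivAt (by simp [minSmoothness_of_isRCLikeNormedField]) a b
    rw [← hDF] at this
    simp only [hA, ← hDF, this]
  have e1 := key u v w
  have e2 := key v w u
  have e3 := key w u v
  have s1 := symm u w v
  have s2 := symm v u w
  have s3 := symm w v u
  show A u v w = 0
  linarith
end
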